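/- arXiv:1703.06767 — 8 statements merged into one kernel-verified Lean document; each statement's English description precedes it below -/
import Mathlib

section
/- Let T > 0, p > 0, C⋆ > 0, γ > 0, δ > 0, and let 0 < η < p with η ≤ 2. Suppose that for every h ∈ (0,1] there are jointly measurable processes v₁ʰ, v₂ʰ on [0,T] with almost surely continuous paths, eʰ := v₁ʰ − v₂ʰ, and a random time τ_h : Ω → [0,T] such that {τ_h < T} ⊆ {sup_{t∈[0,T]}|v₁ʰ(t)| ≥ h^{−γ}} ∪ {sup_{t∈[0,T]}|v₂ʰ(t)| ≥ h^{−γ}}, E[sup_{t∈[0,T]}|vᵢʰ(t)|^p] ≤ C⋆ for i = 1,2, and E[sup_{t∈[0,τ_h]}|eʰ(t)|²] ≤ h^{2δ}. Then there is a constant C, depending only on p, η and C⋆, such that (E[sup_{t∈[0,T]}|eʰ(t)|^η])^{1/η} ≤ C·h^{min{γ(p−η)/η, δ}} for all h ∈ (0,1]. -/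
/-!
Write `E`, `E_τ` for the suprema of `|e|` over `[0,T]` and `[0,τ]`, `S₁`, `S₂` for those of
`|v₁|`, `|v₂|`, and put `K = h^(-γ)`, `a = h^δ`. On `{τ < T}` some `Sᵢ ≥ K` and
`E ≤ S₁ + S₂ ≤ 2 max Sᵢ`, so `E^η ≤ K^(η-p) (2 max Sᵢ)^p` because `η ≤ p`. On `{τ = T}` we have
`E = E_τ`, and `E^η ≤ a^η + a^(η-2) E_τ²` because `η ≤ 2`. Taking expectations,
`E[E^η] ≤ 2 h^(δη) + 2^(p+1) C⋆ h^(γ(p-η))`, and both exponents are at least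
`η min{γ(p-η)/η, δ}`.
-/

open MeasureTheory Set

namespace Real

lemma rpow_le_rpow_sub_mul_rpow {x y K η p : ℝ} (hx : 0 ≤ x) (hK : 0 < K) (hη : 0 ≤ η)
    (hηp : η ≤ p) (hKy : K ≤ y) (hxy : x ≤ y) : x ^ η ≤ K ^ (η - p) * y ^ p := by
  have hy : 0 < y := hK.trans_le hKy
  calc x ^ η ≤ y ^ η := rpow_le_rpow hx hxy hη
    _ = y ^ (η - p) * y ^ p := by rw [← rpow_add hy, sub_add_cancel]
    _ ≤ K ^ (η - p) * y ^ p := by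
      have := rpow_le_rpow_of_nonpos hK hKy (sub_nonpos.2 hηp)
      gcongr

lemma rpow_le_rpow_add_rpow_sub_two_mul_sq {x a η : ℝ} (hx : 0 ≤ x) (ha : 0 < a) (hη : 0 ≤ η)
    (hη2 : η ≤ 2) : x ^ η ≤ a ^ η + a ^ (η - 2) * x ^ 2 := by
  rcases le_total x a with hxa | hax
  · have := mul_nonneg (rpow_nonneg ha.le (η - 2)) (sq_nonneg x)
    linarith [rpow_le_rpow hx hxa hη]
  · have := rpow_le_rpow_sub_mul_rpow hx ha hη hη2 hax le_rfl
    rw [rpow_two] at this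
    linarith [rpow_nonneg ha.le η]

lemma rpow_le_rpow_sub_mul_two_rpow_mul_add {x y₁ y₂ K η p : ℝ} (hx : 0 ≤ x) (hy₁ : 0 ≤ y₁)
    (hy₂ : 0 ≤ y₂) (hK : 0 < K) (hη : 0 ≤ η) (hηp : η ≤ p) (hxy : x ≤ y₁ + y₂)
    (hKy : K ≤ y₁ ∨ K ≤ y₂) : x ^ η ≤ K ^ (η - p) * 2 ^ p * (y₁ ^ p + y₂ ^ p) := by
  have hp : 0 ≤ p := hη.trans hηp
  have hmax : max y₁ y₂ ^ p ≤ y₁ ^ p + y₂ ^ p := by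
    rcases max_choice y₁ y₂ with h | h <;> rw [h]
    · linarith [rpow_nonneg hy₂ p]
    · linarith [rpow_nonneg hy₁ p]
  calc x ^ η ≤ K ^ (η - p) * (2 * max y₁ y₂) ^ p := by
        refine rpow_le_rpow_sub_mul_rpow hx hK hη hηp ?_ ?_
        · rcases hKy with h | h <;> linarith [le_max_left y₁ y₂, le_max_right y₁ y₂]
        · linarith [le_max_left y₁ y₂, le_max_right y₁ y₂]
    _ ≤ K ^ (η - p) * 2 ^ p * (y₁ ^ p + y₂ ^ p) := by
      rw [mul_rpow zero_le_two (hy₁.trans (le_max_left _ _)), ← mul_assoc]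
      gcongr

lemma rpow_add_rpow_mul_add_rpow_mul_le_rpow_min {h γ δ η p M : ℝ} (hh0 : 0 < h) (hh1 : h ≤ 1)
    (hη : 0 < η) (hM : 0 ≤ M) :
    (h ^ δ) ^ η + (h ^ (-γ)) ^ (η - p) * 2 ^ p * (M + M) + (h ^ δ) ^ (η - 2) * h ^ (2 * δ)
      ≤ (2 + 2 ^ (p + 1) * M) * h ^ (min (γ * (p - η) / η) δ * η) := by
  have hlocal : (h ^ δ) ^ η ≤ h ^ (min (γ * (p - η) / η) δ * η) := by
    rw [← rpow_mul hh0.le]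
    exact rpow_le_rpow_of_exponent_ge hh0 hh1 (by gcongr; exact min_le_right _ _)
  have hmoment : (h ^ (-γ)) ^ (η - p) ≤ h ^ (min (γ * (p - η) / η) δ * η) := by
    rw [← rpow_mul hh0.le]
    refine rpow_le_rpow_of_exponent_ge hh0 hh1 ?_
    calc min (γ * (p - η) / η) δ * η ≤ γ * (p - η) / η * η := by gcongr; exact min_le_left _ _
      _ = -γ * (η - p) := by field_simp; ring
  have hsq : (h ^ δ) ^ (η - 2) * h ^ (2 * δ) = (h ^ δ) ^ η := by
    rw [← rpow_mul hh0.le, ← rpow_mul hh0.le, ← rpow_add hh0]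
    ring_nf
  rw [hsq, rpow_add two_pos, rpow_one]
  have h2p : 0 ≤ (2 : ℝ) ^ p := by positivity
  nlinarith [mul_le_mul_of_nonneg_left hmoment (mul_nonneg h2p hM)]

end Real

section PathwiseSupremum

variable {ι Ω : Type*} [TopologicalSpace ι] [MeasurableSpace Ω] {μ : Measure Ω}

lemma aemeasurable_iSup_of_continuous [TopologicalSpace.SeparableSpace ι] {X : ι → Ω → ℝ}
    (hX : ∀ t, Measurable (X t)) (hc : ∀ᵐ ω ∂μ, Continuous fun t ↦ X t ω) :
    AEMeasurable (fun ω ↦ ⨆ t, X t ω) μ := by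
  obtain ⟨S, hS, hdense⟩ := TopologicalSpace.exists_countable_dense ι
  have := hS.to_subtype
  refine ⟨fun ω ↦ ⨆ s : S, X s ω, Measurable.iSup fun s ↦ hX s, ?_⟩
  filter_upwards [hc] with ω hω
  exact (hdense.ciSup' hω).symm

lemma iSup_abs_sub_le_add [CompactSpace ι] {f g : ι → ℝ} (hf : Continuous f)
    (hg : Continuous g) : ⨆ t, |f t - g t| ≤ (⨆ t, |f t|) + ⨆ t, |g t| := by
  have hbdd : ∀ {u : ι → ℝ}, Continuous u → BddAbove (range fun t ↦ |u t|) :=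
    fun hu ↦ (isCompact_range hu.abs).bddAbove
  refine Real.iSup_le (fun t ↦ (abs_sub _ _).trans ?_) ?_
  · exact add_le_add (le_ciSup (hbdd hf) t) (le_ciSup (hbdd hg) t)
  · exact add_nonneg (Real.iSup_nonneg fun _ ↦ abs_nonneg _)
      (Real.iSup_nonneg fun _ ↦ abs_nonneg _)

lemma aemeasurable_iSup_abs_of_continuousOn {v : ℝ → Ω → ℝ} {s : Set ℝ}
    (hv : Measurable (Function.uncurry v))
    (hc : ∀ᵐ ω ∂μ, ContinuousOn (fun t ↦ v t ω) s) :
    AEMeasurable (fun ω ↦ ⨆ t : s, |v t ω|) μ :=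
  aemeasurable_iSup_of_continuous (fun _ ↦ hv.of_uncurry_left.abs)
    (hc.mono fun _ hω ↦ hω.domRestrict.abs)

end PathwiseSupremum

lemma iSup_abs_sub_rpow_le {f g : ℝ → ℝ} {T s a K η p : ℝ} (hf : ContinuousOn f (Icc 0 T))
    (hg : ContinuousOn g (Icc 0 T)) (hsT : s ≤ T)
    (hstop : s < T → K ≤ ⨆ t : Icc (0:ℝ) T, |f t| ∨ K ≤ ⨆ t : Icc (0:ℝ) T, |g t|)
    (ha : 0 < a) (hK : 0 < K) (hη : 0 ≤ η) (hηp : η ≤ p) (hη2 : η ≤ 2) :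
    (⨆ t : Icc (0:ℝ) T, |f t - g t|) ^ η
      ≤ a ^ η + K ^ (η - p) * 2 ^ p * ((⨆ t : Icc (0:ℝ) T, |f t|) ^ p
          + (⨆ t : Icc (0:ℝ) T, |g t|) ^ p)
        + a ^ (η - 2) * (⨆ t : Icc (0:ℝ) s, |f t - g t|) ^ 2 := by
  have hsup_nonneg : ∀ u : Icc (0:ℝ) T → ℝ, 0 ≤ ⨆ t, |u t| :=
    fun _ ↦ Real.iSup_nonneg fun _ ↦ abs_nonneg _
  have hlocal := mul_nonneg (Real.rpow_nonneg ha.le (η - 2))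
    (sq_nonneg (⨆ t : Icc (0:ℝ) s, |f t - g t|))
  have hmoment := mul_nonneg
    (mul_nonneg (Real.rpow_nonneg hK.le (η - p)) (Real.rpow_nonneg zero_le_two p))
    (add_nonneg (Real.rpow_nonneg (hsup_nonneg fun t ↦ f t) p)
      (Real.rpow_nonneg (hsup_nonneg fun t ↦ g t) p))
  rcases hsT.lt_or_eq with hsT | rfl
  · have := Real.rpow_le_rpow_sub_mul_two_rpow_mul_add (hsup_nonneg _) (hsup_nonneg _)
      (hsup_nonneg _) hK hη hηp (iSup_abs_sub_le_add (f := fun t : Icc (0:ℝ) T ↦ f t)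
        (g := fun t ↦ g t) hf.domRestrict hg.domRestrict) (hstop hsT)
    linarith [Real.rpow_nonneg ha.le η]
  · linarith [Real.rpow_le_rpow_add_rpow_sub_two_mul_sq (hsup_nonneg fun t ↦ f t - g t) ha hη hη2]

section Integration

variable {Ω : Type*} [MeasurableSpace Ω] {μ : Measure Ω}

lemma lintegral_ofReal_add_le {f g : Ω → ℝ} (hf : AEMeasurable f μ) :
    ∫⁻ ω, ENNReal.ofReal (f ω + g ω) ∂μ
      ≤ ∫⁻ ω, ENNReal.ofReal (f ω) ∂μ + ∫⁻ ω, ENNReal.ofReal (g ω) ∂μ :=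
  (lintegral_mono fun _ ↦ ENNReal.ofReal_add_le).trans_eq
    (lintegral_add_left' hf.ennreal_ofReal _)

lemma lintegral_ofReal_le_of_ae_le [IsProbabilityMeasure μ] {f X Z : Ω → ℝ} {a b c M G : ℝ}
    (ha : 0 ≤ a) (hb : 0 ≤ b) (hc : 0 ≤ c) (hM : 0 ≤ M) (hG : 0 ≤ G) (hX : AEMeasurable X μ)
    (hf : ∀ᵐ ω ∂μ, f ω ≤ a + b * X ω + c * Z ω)
    (hXM : ∫⁻ ω, ENNReal.ofReal (X ω) ∂μ ≤ ENNReal.ofReal M)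
    (hZG : ∫⁻ ω, ENNReal.ofReal (Z ω) ∂μ ≤ ENNReal.ofReal G) :
    ∫⁻ ω, ENNReal.ofReal (f ω) ∂μ ≤ ENNReal.ofReal (a + b * M + c * G) := by
  calc ∫⁻ ω, ENNReal.ofReal (f ω) ∂μ
      ≤ ∫⁻ ω, ENNReal.ofReal a + ENNReal.ofReal b * ENNReal.ofReal (X ω)
          + ENNReal.ofReal c * ENNReal.ofReal (Z ω) ∂μ := by
        refine lintegral_mono_ae ?_
        filter_upwards [hf] with ω hω
        rw [← ENNReal.ofReal_mul hb, ← ENNReal.ofReal_mul hc]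
        exact (ENNReal.ofReal_le_ofReal hω).trans
          (ENNReal.ofReal_add_le.trans (by gcongr; exact ENNReal.ofReal_add_le))
    _ = ENNReal.ofReal a + ENNReal.ofReal b * ∫⁻ ω, ENNReal.ofReal (X ω) ∂μ
          + ENNReal.ofReal c * ∫⁻ ω, ENNReal.ofReal (Z ω) ∂μ := by
        rw [lintegral_add_left'
            (f := fun ω ↦ ENNReal.ofReal a + ENNReal.ofReal b * ENNReal.ofReal (X ω))
            (aemeasurable_const.add (hX.ennreal_ofReal.const_mul _)),
          lintegral_add_left' aemeasurable_const, lintegral_const, measure_univ, mul_one,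
          lintegral_const_mul'' _ hX.ennreal_ofReal,
          lintegral_const_mul' _ _ ENNReal.ofReal_ne_top]
    _ ≤ ENNReal.ofReal a + ENNReal.ofReal b * ENNReal.ofReal M
          + ENNReal.ofReal c * ENNReal.ofReal G := by gcongr
    _ = ENNReal.ofReal (a + b * M + c * G) := by
        rw [ENNReal.ofReal_add (by positivity) (by positivity),
          ENNReal.ofReal_add ha (by positivity),
          ENNReal.ofReal_mul hb, ENNReal.ofReal_mul hc]

end Integration

theorem enkf_rate_lemma_effective_rate_general
    {Ω : Type*} [MeasurableSpace Ω] (μ : Measure Ω) [IsProbabilityMeasure μ]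
    (p η Cs : ℝ) (hCs : 0 < Cs) (hη0 : 0 < η) (hηp : η < p) (hη2 : η ≤ 2) :
    ∃ C > 0, ∀ T γ δ : ℝ, 0 < T → 0 < γ → 0 < δ →
      ∀ h ∈ Ioc (0:ℝ) 1, ∀ (v₁ v₂ : ℝ → Ω → ℝ) (τ : Ω → ℝ),
      Measurable (Function.uncurry v₁) → Measurable (Function.uncurry v₂) →
      (∀ᵐ ω ∂μ, ContinuousOn (fun t => v₁ t ω) (Icc 0 T)) →
      (∀ᵐ ω ∂μ, ContinuousOn (fun t => v₂ t ω) (Icc 0 T)) →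
      Measurable τ → (∀ ω, τ ω ∈ Icc (0:ℝ) T) →
      ({ω | τ ω < T} ⊆
        {ω | h ^ (-γ) ≤ ⨆ t : Icc (0:ℝ) T, |v₁ t.1 ω|}
          ∪ {ω | h ^ (-γ) ≤ ⨆ t : Icc (0:ℝ) T, |v₂ t.1 ω|}) →
      (∫⁻ ω, ENNReal.ofReal ((⨆ t : Icc (0:ℝ) T, |v₁ t.1 ω|) ^ p) ∂μ ≤ ENNReal.ofReal Cs) →
      (∫⁻ ω, ENNReal.ofReal ((⨆ t : Icc (0:ℝ) T, |v₂ t.1 ω|) ^ p) ∂μ ≤ ENNReal.ofReal Cs) →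
      (∫⁻ ω, ENNReal.ofReal ((⨆ t : Icc (0:ℝ) (τ ω), |v₁ t.1 ω - v₂ t.1 ω|) ^ 2) ∂μ
          ≤ ENNReal.ofReal (h ^ (2 * δ))) →
      (∫⁻ ω, ENNReal.ofReal ((⨆ t : Icc (0:ℝ) T, |v₁ t.1 ω - v₂ t.1 ω|) ^ η) ∂μ) ^ (1/η)
        ≤ ENNReal.ofReal (C * h ^ min (γ * (p - η) / η) δ) := by
  refine ⟨(2 + 2 ^ (p + 1) * Cs) ^ (1 / η), by positivity, ?_⟩
  intro T γ δ _ _ _ h ⟨hh0, hh1⟩ v₁ v₂ τ hv₁ hv₂ hc₁ hc₂ _ hτ hstop hI₁ hI₂ hIe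
  have hmeas : ∀ {v : ℝ → Ω → ℝ}, Measurable (Function.uncurry v) →
      (∀ᵐ ω ∂μ, ContinuousOn (fun t ↦ v t ω) (Icc 0 T)) →
      AEMeasurable (fun ω ↦ (⨆ t : Icc (0:ℝ) T, |v t.1 ω|) ^ p) μ :=
    fun hv hc ↦ (aemeasurable_iSup_abs_of_continuousOn hv hc).pow_const p
  have hmoments := (lintegral_ofReal_add_le (hmeas hv₁ hc₁)).trans
    ((add_le_add hI₁ hI₂).trans_eq (ENNReal.ofReal_add hCs.le hCs.le).symm)
  have hpath : ∀ᵐ ω ∂μ, (⨆ t : Icc (0:ℝ) T, |v₁ t.1 ω - v₂ t.1 ω|) ^ η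
      ≤ (h ^ δ) ^ η + (h ^ (-γ)) ^ (η - p) * 2 ^ p * ((⨆ t : Icc (0:ℝ) T, |v₁ t.1 ω|) ^ p
          + (⨆ t : Icc (0:ℝ) T, |v₂ t.1 ω|) ^ p)
        + (h ^ δ) ^ (η - 2) * (⨆ t : Icc (0:ℝ) (τ ω), |v₁ t.1 ω - v₂ t.1 ω|) ^ 2 := by
    filter_upwards [hc₁, hc₂] with ω h₁ h₂
    exact iSup_abs_sub_rpow_le h₁ h₂ (hτ ω).2 (fun hs ↦ hstop hs) (Real.rpow_pos_of_pos hh0 δ)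
      (Real.rpow_pos_of_pos hh0 (-γ)) hη0.le hηp.le hη2
  have hE := lintegral_ofReal_le_of_ae_le (by positivity) (by positivity) (by positivity)
    (by positivity) (by positivity) ((hmeas hv₁ hc₁).add (hmeas hv₂ hc₂)) hpath hmoments hIe
  have hC : 0 < (2 + 2 ^ (p + 1) * Cs) * h ^ (min (γ * (p - η) / η) δ * η) := by positivity
  calc _ ≤ ENNReal.ofReal ((2 + 2 ^ (p + 1) * Cs) * h ^ (min (γ * (p - η) / η) δ * η)) ^ (1 / η) :=
        ENNReal.rpow_le_rpow (hE.trans (ENNReal.ofReal_le_ofReal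
          (Real.rpow_add_rpow_mul_add_rpow_mul_le_rpow_min hh0 hh1 hη0 hCs.le))) (by positivity)
    _ = _ := by
      rw [ENNReal.ofReal_rpow_of_pos hC, Real.mul_rpow (by positivity) (by positivity),
        ← Real.rpow_mul hh0.le, mul_assoc, mul_one_div_cancel hη0.ne', mul_one]

/-- Rate version of lemma `lem:rate`: with stopping level `h^(-γ)` and localized error bound
`h^(2δ)`, the uniform strong error in `L^η` is of order `h^(min{γ(p-η)/η, δ})`, with a constant
depending only on `p`, `η` and `C⋆`. -/
theorem enkf_rate_lemma_effective_rate
    {Ω : Type*} [MeasurableSpace Ω] (μ : Measure Ω) [IsProbabilityMeasure μ]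
    (p η Cs : ℝ) (hp : 0 < p) (hCs : 0 < Cs) (hη0 : 0 < η) (hηp : η < p) (hη2 : η ≤ 2) :
    ∃ C > 0, ∀ T γ δ : ℝ, 0 < T → 0 < γ → 0 < δ →
      ∀ h ∈ Ioc (0:ℝ) 1, ∀ (v₁ v₂ : ℝ → Ω → ℝ) (τ : Ω → ℝ),
      Measurable (Function.uncurry v₁) → Measurable (Function.uncurry v₂) →
      (∀ᵐ ω ∂μ, ContinuousOn (fun t => v₁ t ω) (Icc 0 T)) →
      (∀ᵐ ω ∂μ, ContinuousOn (fun t => v₂ t ω) (Icc 0 T)) →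
      Measurable τ → (∀ ω, τ ω ∈ Icc (0:ℝ) T) →
      ({ω | τ ω < T} ⊆
        {ω | h ^ (-γ) ≤ ⨆ t : Icc (0:ℝ) T, |v₁ t.1 ω|}
          ∪ {ω | h ^ (-γ) ≤ ⨆ t : Icc (0:ℝ) T, |v₂ t.1 ω|}) →
      (∫⁻ ω, ENNReal.ofReal ((⨆ t : Icc (0:ℝ) T, |v₁ t.1 ω|) ^ p) ∂μ ≤ ENNReal.ofReal Cs) →
      (∫⁻ ω, ENNReal.ofReal ((⨆ t : Icc (0:ℝ) T, |v₂ t.1 ω|) ^ p) ∂μ ≤ ENNReal.ofReal Cs) →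
      (∫⁻ ω, ENNReal.ofReal ((⨆ t : Icc (0:ℝ) (τ ω), |v₁ t.1 ω - v₂ t.1 ω|) ^ 2) ∂μ
          ≤ ENNReal.ofReal (h ^ (2 * δ))) →
      (∫⁻ ω, ENNReal.ofReal ((⨆ t : Icc (0:ℝ) T, |v₁ t.1 ω - v₂ t.1 ω|) ^ η) ∂μ) ^ (1/η)
        ≤ ENNReal.ofReal (C * h ^ min (γ * (p - η) / η) δ) :=
  enkf_rate_lemma_effective_rate_general μ p η Cs hCs hη0 hηp hη2
end

section
/- Let T > 0, C⋆ > 0, p > 0, s > p, 0 < q < s and ρ > 0; set γ := qs/(p(qs + 2(s−q)) + qρs) and δ := (1 − ργ)/2 (which is positive). Suppose that for every h ∈ (0,1] there are jointly measurable processes v₁ʰ, v₂ʰ on [0,T] with almost surely continuous paths, eʰ := v₁ʰ − v₂ʰ, and a random time τ_h : Ω → [0,T] such that {τ_h < T} ⊆ {sup_{t∈[0,T]}|v₁ʰ(t)| ≥ h^{−γ}} ∪ {sup_{t∈[0,T]}|v₂ʰ(t)| ≥ h^{−γ}}, E[sup_{t∈[0,T]}|vᵢʰ(t)|^p] ≤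 C⋆ and sup_{t∈[0,T]} E[|vᵢʰ(t)|^s] ≤ C⋆ for i = 1,2, and E[sup_{t∈[0,τ_h]}|eʰ(t)|²] ≤ h^{2δ}. Then there is a constant C, depending only on p, q, s, ρ and C⋆, such that (sup_{t∈[0,T]} E[|eʰ(t)|^q])^{1/q} ≤ C·h^{p(s−q)/(2p(s−q) + (p+ρ)qs)} for all h ∈ (0,1]. -/
/-!
Split `E|e(t)|^q` over `A = {τ < T}` and its complement. Markov's inequality for the `p`-th
moments of the pathwise suprema gives `P(A) ≤ 2 C⋆ h^(γp)`, and on `A` the splitting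
`x^q ≤ m^(q-s) x^s + m^q` with `m = h^(-γp/s)` trades the `s`-th moment against `P(A)`.
Off `A` we have `τ = T`, so `|e(t)|` is dominated by the stopped supremum, whose second moment
is `h^(2δ)`; the same splitting between the exponents `0, q, 2` (if `q ≤ 2`) or `2, q, s`
(if `q > 2`) bounds that part too. The exponents `γ` and `δ` are tuned so that every resulting
exponent of `h` is at least `qα`, with `α` the rate of the statement.
-/

open MeasureTheory Set

open ENNReal (ofReal ofReal_le_ofReal ofReal_mul ofReal_add ofReal_ne_top)

theorem Real.rpow_le_mul_rpow_add_mul_rpow {x m a b r : ℝ} (hx : 0 ≤ x) (hm : 0 < m)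
    (hb : 0 ≤ b) (hba : b ≤ a) (har : a ≤ r) :
    x ^ a ≤ m ^ (a - b) * x ^ b + m ^ (a - r) * x ^ r := by
  have hr : 0 ≤ m ^ (a - r) * x ^ r := by positivity
  rcases hba.eq_or_lt with rfl | hba
  · simp only [sub_self, Real.rpow_zero, one_mul]
    linarith
  rcases hx.eq_or_lt with rfl | hx
  · rw [Real.zero_rpow (hb.trans_lt hba).ne']
    positivity
  rcases le_or_gt x m with hxm | hmx
  · have hsplit : x ^ a = x ^ (a - b) * x ^ b := by rw [← Real.rpow_add hx, sub_add_cancel]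
    have hle : x ^ (a - b) ≤ m ^ (a - b) := by gcongr
    rw [hsplit]
    nlinarith [Real.rpow_nonneg hx.le b]
  · have hsplit : x ^ a = x ^ (a - r) * x ^ r := by rw [← Real.rpow_add hx, sub_add_cancel]
    have hle : x ^ (a - r) ≤ m ^ (a - r) :=
      Real.rpow_le_rpow_of_nonpos hm hmx.le (by linarith)
    have : 0 ≤ m ^ (a - b) * x ^ b := by positivity
    rw [hsplit]
    nlinarith [Real.rpow_nonneg hx.le r]

theorem Real.abs_sub_rpow_le (a b : ℝ) {r : ℝ} (hr : 0 ≤ r) :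
    |a - b| ^ r ≤ 2 ^ r * (|a| ^ r + |b| ^ r) := by
  have hmax : |a - b| ≤ 2 * max |a| |b| := by
    linarith [abs_sub a b, le_max_left |a| |b|, le_max_right |a| |b|]
  calc |a - b| ^ r ≤ (2 * max |a| |b|) ^ r := by gcongr
    _ = 2 ^ r * max |a| |b| ^ r := Real.mul_rpow zero_le_two (by positivity)
    _ ≤ 2 ^ r * (|a| ^ r + |b| ^ r) := by
        gcongr
        rcases max_cases |a| |b| with ⟨hab, -⟩ | ⟨hab, -⟩ <;> rw [hab]
        · linarith [Real.rpow_nonneg (abs_nonneg b) r]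
        · linarith [Real.rpow_nonneg (abs_nonneg a) r]

theorem ENNReal.rpow_one_div_le_ofReal {x : ENNReal} {K h q α : ℝ} (hq : 0 < q) (hK : 0 ≤ K)
    (hh : 0 ≤ h) (hx : x ≤ ofReal (K * h ^ (q * α))) :
    x ^ (1 / q) ≤ ofReal (K ^ (1 / q) * h ^ α) := by
  calc x ^ (1 / q) ≤ ofReal (K * h ^ (q * α)) ^ (1 / q) := by gcongr
    _ = ofReal ((K * h ^ (q * α)) ^ (1 / q)) :=
        ENNReal.ofReal_rpow_of_nonneg (by positivity) (by positivity)
    _ = ofReal (K ^ (1 / q) * h ^ α) := by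
        rw [Real.mul_rpow hK (by positivity), ← Real.rpow_mul hh]
        field_simp

section Moments

variable {Ω : Type*} [MeasurableSpace Ω] (μ : Measure Ω)

theorem aemeasurable_iSup_of_ae_continuous {ι : Type*} [TopologicalSpace ι]
    [TopologicalSpace.SeparableSpace ι] {f : ι → Ω → ℝ} (hf : ∀ t, Measurable (f t))
    (hc : ∀ᵐ ω ∂μ, Continuous fun t => f t ω) :
    AEMeasurable (fun ω => ⨆ t, f t ω) μ := by
  obtain ⟨D, hDc, hD⟩ := TopologicalSpace.exists_countable_dense ι
  have : Countable D := hDc.to_subtype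
  refine (Measurable.iSup fun t : D => hf t).aemeasurable.congr ?_
  filter_upwards [hc] with ω hω using hD.ciSup' hω

theorem meas_ge_le_ofReal_mul_rpow_neg {S : Ω → ℝ} (hS : AEMeasurable S μ) {p c B : ℝ}
    (hp : 0 ≤ p) (hc : 0 < c) (hSp : ∫⁻ ω, ofReal (S ω ^ p) ∂μ ≤ ofReal B) :
    μ {ω | c ≤ S ω} ≤ ofReal (B * c ^ (-p)) := by
  have hcp : 0 < c ^ p := Real.rpow_pos_of_pos hc p
  calc μ {ω | c ≤ S ω} ≤ μ {ω | ofReal (c ^ p) ≤ ofReal (S ω ^ p)} :=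
        measure_mono fun ω hω => ofReal_le_ofReal (Real.rpow_le_rpow hc.le hω hp)
    _ ≤ (∫⁻ ω, ofReal (S ω ^ p) ∂μ) / ofReal (c ^ p) :=
        meas_ge_le_lintegral_div (by fun_prop) (ENNReal.ofReal_pos.2 hcp).ne' ofReal_ne_top
    _ ≤ ofReal B / ofReal (c ^ p) := by gcongr
    _ = ofReal (B * c ^ (-p)) := by
        rw [← ENNReal.ofReal_div_of_pos hcp, Real.rpow_neg hc.le, div_eq_mul_inv]

theorem measure_le_two_mul_of_subset_union {S₁ S₂ : Ω → ℝ} (hS₁ : AEMeasurable S₁ μ)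
    (hS₂ : AEMeasurable S₂ μ) {A : Set Ω} {p c B : ℝ} (hp : 0 ≤ p) (hc : 0 < c) (hB : 0 ≤ B)
    (hA : A ⊆ {ω | c ≤ S₁ ω} ∪ {ω | c ≤ S₂ ω})
    (hS₁p : ∫⁻ ω, ofReal (S₁ ω ^ p) ∂μ ≤ ofReal B)
    (hS₂p : ∫⁻ ω, ofReal (S₂ ω ^ p) ∂μ ≤ ofReal B) :
    μ A ≤ ofReal (2 * B * c ^ (-p)) := by
  calc μ A ≤ μ {ω | c ≤ S₁ ω} + μ {ω | c ≤ S₂ ω} :=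
        (measure_mono hA).trans (measure_union_le _ _)
    _ ≤ ofReal (B * c ^ (-p)) + ofReal (B * c ^ (-p)) :=
        add_le_add (meas_ge_le_ofReal_mul_rpow_neg μ hS₁ hp hc hS₁p)
          (meas_ge_le_ofReal_mul_rpow_neg μ hS₂ hp hc hS₂p)
    _ = ofReal (2 * B * c ^ (-p)) := by
        rw [← ofReal_add (by positivity) (by positivity)]
        ring_nf

theorem lintegral_abs_sub_rpow_le {f g : Ω → ℝ} (hf : Measurable f) {r : ℝ} (hr : 0 ≤ r) :
    ∫⁻ ω, ofReal (|f ω - g ω| ^ r) ∂μ ≤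
      ofReal (2 ^ r) * (∫⁻ ω, ofReal (|f ω| ^ r) ∂μ + ∫⁻ ω, ofReal (|g ω| ^ r) ∂μ) := by
  rw [← lintegral_add_left (by fun_prop), ← lintegral_const_mul' _ _ ofReal_ne_top]
  refine lintegral_mono fun ω => ?_
  rw [← ofReal_add (by positivity) (by positivity), ← ofReal_mul (by positivity)]
  exact ofReal_le_ofReal (Real.abs_sub_rpow_le _ _ hr)

variable {X : Ω → ℝ} (hX : Measurable X) (hX0 : ∀ ω, 0 ≤ X ω)
include hX hX0

theorem setLIntegral_rpow_le_mul_add_mul (S : Set Ω) {m a b r : ℝ} (hm : 0 < m) (hb : 0 ≤ b)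
    (hba : b ≤ a) (har : a ≤ r) :
    ∫⁻ ω in S, ofReal (X ω ^ a) ∂μ ≤
      ofReal (m ^ (a - b)) * ∫⁻ ω in S, ofReal (X ω ^ b) ∂μ +
        ofReal (m ^ (a - r)) * ∫⁻ ω in S, ofReal (X ω ^ r) ∂μ := by
  rw [← lintegral_const_mul' _ _ ofReal_ne_top, ← lintegral_const_mul' _ _ ofReal_ne_top,
    ← lintegral_add_left (by fun_prop)]
  refine lintegral_mono fun ω => ?_
  have hXω := hX0 ω
  rw [← ofReal_mul (by positivity), ← ofReal_mul (by positivity),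
    ← ofReal_add (by positivity) (by positivity)]
  exact ofReal_le_ofReal (Real.rpow_le_mul_rpow_add_mul_rpow hXω hm hb hba har)

theorem setLIntegral_rpow_le_of_measure_le {A : Set Ω} {q s M c ε : ℝ} (hq : 0 ≤ q)
    (hqs : q < s) (hM : 0 ≤ M) (hc : 0 ≤ c) (hε : 0 < ε)
    (hXs : ∫⁻ ω in A, ofReal (X ω ^ s) ∂μ ≤ ofReal M) (hA : μ A ≤ ofReal (c * ε)) :
    ∫⁻ ω in A, ofReal (X ω ^ q) ∂μ ≤ ofReal ((M + c) * ε ^ ((s - q) / s)) := by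
  have hs : s ≠ 0 := (hq.trans_lt hqs).ne'
  set m := ε ^ (-1 / s)
  have hm : 0 < m := Real.rpow_pos_of_pos hε _
  have hmq : m ^ q * ε = ε ^ ((s - q) / s) := by
    rw [← Real.rpow_mul hε.le, ← Real.rpow_add_one hε.ne']
    congr 1
    field_simp
    ring
  have hmqs : m ^ (q - s) = ε ^ ((s - q) / s) := by
    rw [← Real.rpow_mul hε.le]
    congr 1
    field_simp
    ring
  calc ∫⁻ ω in A, ofReal (X ω ^ q) ∂μ
      ≤ ofReal (m ^ (q - 0)) * ∫⁻ ω in A, ofReal (X ω ^ (0 : ℝ)) ∂μ +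
          ofReal (m ^ (q - s)) * ∫⁻ ω in A, ofReal (X ω ^ s) ∂μ :=
        setLIntegral_rpow_le_mul_add_mul μ hX hX0 A hm le_rfl hq hqs.le
    _ ≤ ofReal (m ^ q) * ofReal (c * ε) + ofReal (m ^ (q - s)) * ofReal M := by
        simp only [sub_zero, Real.rpow_zero, ENNReal.ofReal_one, setLIntegral_const, one_mul]
        gcongr
    _ = ofReal ((M + c) * ε ^ ((s - q) / s)) := by
        rw [← ofReal_mul (by positivity), ← ofReal_mul (by positivity),
          ← ofReal_add (by positivity) (by positivity), ← hmqs]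
        congr 1
        linear_combination c * hmq - c * hmqs

theorem setLIntegral_rpow_le_of_le_two [IsProbabilityMeasure μ] (S : Set Ω) {q η : ℝ}
    (hq : 0 ≤ q) (hq2 : q ≤ 2) (hη : 0 < η)
    (hX2 : ∫⁻ ω in S, ofReal (X ω ^ (2 : ℝ)) ∂μ ≤ ofReal η) :
    ∫⁻ ω in S, ofReal (X ω ^ q) ∂μ ≤ ofReal (2 * η ^ (q / 2)) := by
  set m := η ^ (1 / 2 : ℝ)
  have hm : 0 < m := Real.rpow_pos_of_pos hη _
  have hmq : m ^ q = η ^ (q / 2) := by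
    rw [← Real.rpow_mul hη.le]
    ring_nf
  have hmq2 : m ^ (q - 2) * η = η ^ (q / 2) := by
    rw [← Real.rpow_mul hη.le, ← Real.rpow_add_one hη.ne']
    ring_nf
  calc ∫⁻ ω in S, ofReal (X ω ^ q) ∂μ
      ≤ ofReal (m ^ (q - 0)) * ∫⁻ ω in S, ofReal (X ω ^ (0 : ℝ)) ∂μ +
          ofReal (m ^ (q - 2)) * ∫⁻ ω in S, ofReal (X ω ^ (2 : ℝ)) ∂μ :=
        setLIntegral_rpow_le_mul_add_mul μ hX hX0 S hm le_rfl hq hq2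
    _ ≤ ofReal (m ^ q) * 1 + ofReal (m ^ (q - 2)) * ofReal η := by
        simp only [sub_zero, Real.rpow_zero, ENNReal.ofReal_one, setLIntegral_const, one_mul]
        gcongr
        exact prob_le_one
    _ = ofReal (2 * η ^ (q / 2)) := by
        rw [mul_one, ← ofReal_mul (by positivity), hmq, hmq2,
          ← ofReal_add (by positivity) (by positivity), two_mul]

theorem setLIntegral_rpow_le_of_two_le (S : Set Ω) {q s M η : ℝ} (hq2 : 2 ≤ q) (hqs : q ≤ s)
    (hs2 : 2 < s) (hM : 0 ≤ M) (hη : 0 < η)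
    (hX2 : ∫⁻ ω in S, ofReal (X ω ^ (2 : ℝ)) ∂μ ≤ ofReal η)
    (hXs : ∫⁻ ω in S, ofReal (X ω ^ s) ∂μ ≤ ofReal M) :
    ∫⁻ ω in S, ofReal (X ω ^ q) ∂μ ≤ ofReal ((1 + M) * η ^ ((s - q) / (s - 2))) := by
  have hs2' : s - 2 ≠ 0 := by linarith
  set m := η ^ (-1 / (s - 2))
  have hm : 0 < m := Real.rpow_pos_of_pos hη _
  have hmq2 : m ^ (q - 2) * η = η ^ ((s - q) / (s - 2)) := by
    rw [← Real.rpow_mul hη.le, ← Real.rpow_add_one hη.ne']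
    congr 1
    field_simp
    ring
  have hmqs : m ^ (q - s) = η ^ ((s - q) / (s - 2)) := by
    rw [← Real.rpow_mul hη.le]
    congr 1
    field_simp
    ring
  calc ∫⁻ ω in S, ofReal (X ω ^ q) ∂μ
      ≤ ofReal (m ^ (q - 2)) * ∫⁻ ω in S, ofReal (X ω ^ (2 : ℝ)) ∂μ +
          ofReal (m ^ (q - s)) * ∫⁻ ω in S, ofReal (X ω ^ s) ∂μ :=
        setLIntegral_rpow_le_mul_add_mul μ hX hX0 S hm zero_le_two hq2 hqs
    _ ≤ ofReal (m ^ (q - 2)) * ofReal η + ofReal (m ^ (q - s)) * ofReal M := by gcongr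
    _ = ofReal ((1 + M) * η ^ ((s - q) / (s - 2))) := by
        rw [← ofReal_mul (by positivity), ← ofReal_mul (by positivity), hmq2, hmqs,
          ← ofReal_add (by positivity) (by positivity)]
        ring_nf

theorem lintegral_rpow_le_of_moment_bounds [IsProbabilityMeasure μ] {A : Set Ω}
    (hA : MeasurableSet A) {q s M c h κ ν β : ℝ} (hq : 0 ≤ q) (hqs : q < s) (hM : 0 ≤ M)
    (hc : 0 ≤ c) (hh0 : 0 < h) (hh1 : h ≤ 1)
    (hXs : ∫⁻ ω, ofReal (X ω ^ s) ∂μ ≤ ofReal M) (hμA : μ A ≤ ofReal (c * h ^ κ))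
    (hX2 : ∫⁻ ω in Aᶜ, ofReal (X ω ^ (2 : ℝ)) ∂μ ≤ ofReal (h ^ ν))
    (hβκ : β ≤ κ * ((s - q) / s)) (hβν : β ≤ ν * (q / 2))
    (hβν' : 2 < q → β ≤ ν * ((s - q) / (s - 2))) :
    ∫⁻ ω, ofReal (X ω ^ q) ∂μ ≤ ofReal ((2 * M + c + 2) * h ^ β) := by
  have hXs' (S : Set Ω) : ∫⁻ ω in S, ofReal (X ω ^ s) ∂μ ≤ ofReal M :=
    (setLIntegral_le_lintegral S _).trans hXs
  have hpow {x : ℝ} (hx : β ≤ x) : h ^ x ≤ h ^ β := Real.rpow_le_rpow_of_exponent_ge hh0 hh1 hx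
  have hβ : 0 ≤ h ^ β := by positivity
  have on_A : ∫⁻ ω in A, ofReal (X ω ^ q) ∂μ ≤ ofReal ((M + c) * h ^ β) := by
    refine (setLIntegral_rpow_le_of_measure_le μ hX hX0 hq hqs hM hc
      (Real.rpow_pos_of_pos hh0 κ) (hXs' A) hμA).trans (ofReal_le_ofReal ?_)
    rw [← Real.rpow_mul hh0.le]
    exact mul_le_mul_of_nonneg_left (hpow hβκ) (by positivity)
  have off_A : ∫⁻ ω in Aᶜ, ofReal (X ω ^ q) ∂μ ≤ ofReal ((M + 2) * h ^ β) := by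
    rcases le_or_gt q 2 with hq2 | hq2
    · refine (setLIntegral_rpow_le_of_le_two μ hX hX0 Aᶜ hq hq2
        (Real.rpow_pos_of_pos hh0 ν) hX2).trans (ofReal_le_ofReal ?_)
      rw [← Real.rpow_mul hh0.le]
      nlinarith [hpow hβν]
    · refine (setLIntegral_rpow_le_of_two_le μ hX hX0 Aᶜ hq2.le hqs.le (hq2.trans hqs) hM
        (Real.rpow_pos_of_pos hh0 ν) hX2 (hXs' Aᶜ)).trans (ofReal_le_ofReal ?_)
      rw [← Real.rpow_mul hh0.le]
      nlinarith [hpow (hβν' hq2)]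
  calc ∫⁻ ω, ofReal (X ω ^ q) ∂μ
      = ∫⁻ ω in A, ofReal (X ω ^ q) ∂μ + ∫⁻ ω in Aᶜ, ofReal (X ω ^ q) ∂μ :=
        (lintegral_add_compl _ hA).symm
    _ ≤ ofReal ((M + c) * h ^ β) + ofReal ((M + 2) * h ^ β) := add_le_add on_A off_A
    _ = ofReal ((2 * M + c + 2) * h ^ β) := by
        rw [← ofReal_add (by positivity) (by positivity)]
        ring_nf

end Moments

theorem abs_le_iSup_Icc_of_continuousOn {f : ℝ → ℝ} {a b t : ℝ} (hf : ContinuousOn f (Icc a b))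
    (ht : t ∈ Icc a b) : |f t| ≤ ⨆ t' : Icc a b, |f t'| :=
  le_ciSup (isCompact_range hf.domRestrict.abs).bddAbove ⟨t, ht⟩

theorem setLIntegral_compl_sq_le_of_stopped {Ω : Type*} [MeasurableSpace Ω] (μ : Measure Ω)
    {v : ℝ → Ω → ℝ} {τ : Ω → ℝ} {T t : ℝ} (hτ : Measurable τ) (hτT : ∀ ω, τ ω ≤ T)
    (hc : ∀ᵐ ω ∂μ, ContinuousOn (fun t => v t ω) (Icc 0 T)) (ht : t ∈ Icc 0 T) :
    ∫⁻ ω in {ω | τ ω < T}ᶜ, ofReal (|v t ω| ^ (2 : ℝ)) ∂μ ≤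
      ∫⁻ ω, ofReal ((⨆ t' : Icc (0 : ℝ) (τ ω), |v t' ω|) ^ 2) ∂μ := by
  refine (setLIntegral_mono_ae' (measurableSet_lt hτ measurable_const).compl ?_).trans
    (setLIntegral_le_lintegral _ _)
  filter_upwards [hc] with ω hω hτω
  have hτω : τ ω = T := (hτT ω).antisymm (not_lt.1 hτω)
  rw [Real.rpow_two, hτω]
  exact ofReal_le_ofReal (pow_le_pow_left₀ (abs_nonneg _)
    (abs_le_iSup_Icc_of_continuousOn hω ht) 2)

/-- The exponent `γ`: on `{τ_h < T}` a path exceeds the truncation level `h ^ (-γ)`. -/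
noncomputable def truncationExponent (p q s ρ : ℝ) : ℝ :=
  q * s / (p * (q * s + 2 * (s - q)) + q * ρ * s)

noncomputable def optimalRate (p q s ρ : ℝ) : ℝ :=
  p * (s - q) / (2 * p * (s - q) + (p + ρ) * q * s)

section Exponents

variable {p q s ρ : ℝ} (hp : 0 < p) (hq : 0 < q) (hqs : q < s) (hρ : 0 < ρ)
include hp hq hqs hρ

theorem truncationExponent_denom_pos : 0 < p * (q * s + 2 * (s - q)) + q * ρ * s := by
  have hs : 0 < s := hq.trans hqs
  have : 0 < q * s + 2 * (s - q) := by nlinarith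
  exact add_pos (mul_pos hp this) (by positivity)

theorem mul_optimalRate_eq :
    q * optimalRate p q s ρ = truncationExponent p q s ρ * p * ((s - q) / s) := by
  have hD := (truncationExponent_denom_pos hp hq hqs hρ).ne'
  have hs : s ≠ 0 := (hq.trans hqs).ne'
  rw [optimalRate, truncationExponent]
  field_simp
  ring

theorem mul_optimalRate_le_mul_half :
    q * optimalRate p q s ρ ≤ (1 - ρ * truncationExponent p q s ρ) * (q / 2) := by
  have hD := truncationExponent_denom_pos hp hq hqs hρ
  rw [optimalRate, truncationExponent, show 2 * p * (s - q) + (p + ρ) * q * s =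
    p * (q * s + 2 * (s - q)) + q * ρ * s by ring]
  generalize hDdef : p * (q * s + 2 * (s - q)) + q * ρ * s = D at hD ⊢
  field_simp
  nlinarith [mul_pos (mul_pos hp hq) (hq.trans hqs)]

theorem mul_optimalRate_le_mul_div (hs2 : 2 < s) :
    q * optimalRate p q s ρ ≤ (1 - ρ * truncationExponent p q s ρ) * ((s - q) / (s - 2)) := by
  have hD := truncationExponent_denom_pos hp hq hqs hρ
  have hs2' : 0 < s - 2 := by linarith
  rw [optimalRate, truncationExponent, show 2 * p * (s - q) + (p + ρ) * q * s =
    p * (q * s + 2 * (s - q)) + q * ρ * s by ring]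
  generalize hDdef : p * (q * s + 2 * (s - q)) + q * ρ * s = D at hD ⊢
  field_simp
  rw [← hDdef]
  nlinarith [mul_pos (mul_pos hp (sub_pos.2 hqs)) (hq.trans hqs)]

end Exponents

theorem enkf_rate_weak_optimal_general
    {Ω : Type*} [MeasurableSpace Ω] (μ : Measure Ω) [IsProbabilityMeasure μ]
    (p q s ρ Cs : ℝ) (hp : 0 < p) (hq0 : 0 < q) (hqs : q < s)
    (hρ : 0 < ρ) (hCs : 0 < Cs) :
    ∃ C > 0, ∀ T : ℝ, 0 < T →
      ∀ h ∈ Ioc (0:ℝ) 1, ∀ (v₁ v₂ : ℝ → Ω → ℝ) (τ : Ω → ℝ),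
      Measurable (Function.uncurry v₁) → Measurable (Function.uncurry v₂) →
      (∀ᵐ ω ∂μ, ContinuousOn (fun t => v₁ t ω) (Icc 0 T)) →
      (∀ᵐ ω ∂μ, ContinuousOn (fun t => v₂ t ω) (Icc 0 T)) →
      Measurable τ → (∀ ω, τ ω ∈ Icc (0:ℝ) T) →
      ({ω | τ ω < T} ⊆
        {ω | h ^ (-(q * s / (p * (q * s + 2 * (s - q)) + q * ρ * s)))
              ≤ ⨆ t : Icc (0:ℝ) T, |v₁ t.1 ω|}
          ∪ {ω | h ^ (-(q * s / (p * (q * s + 2 * (s - q)) + q * ρ * s)))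
              ≤ ⨆ t : Icc (0:ℝ) T, |v₂ t.1 ω|}) →
      (∫⁻ ω, ENNReal.ofReal ((⨆ t : Icc (0:ℝ) T, |v₁ t.1 ω|) ^ p) ∂μ ≤ ENNReal.ofReal Cs) →
      (∫⁻ ω, ENNReal.ofReal ((⨆ t : Icc (0:ℝ) T, |v₂ t.1 ω|) ^ p) ∂μ ≤ ENNReal.ofReal Cs) →
      ((⨆ t : Icc (0:ℝ) T, ∫⁻ ω, ENNReal.ofReal (|v₁ t.1 ω| ^ s) ∂μ) ≤ ENNReal.ofReal Cs) →
      ((⨆ t : Icc (0:ℝ) T, ∫⁻ ω, ENNReal.ofReal (|v₂ t.1 ω| ^ s) ∂μ) ≤ ENNReal.ofReal Cs) →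
      (∫⁻ ω, ENNReal.ofReal ((⨆ t : Icc (0:ℝ) (τ ω), |v₁ t.1 ω - v₂ t.1 ω|) ^ 2) ∂μ
          ≤ ENNReal.ofReal
              (h ^ (2 * ((1 - ρ * (q * s / (p * (q * s + 2 * (s - q)) + q * ρ * s))) / 2)))) →
      (⨆ t : Icc (0:ℝ) T, ∫⁻ ω, ENNReal.ofReal (|v₁ t.1 ω - v₂ t.1 ω| ^ q) ∂μ) ^ (1/q)
        ≤ ENNReal.ofReal (C * h ^ (p * (s - q) / (2 * p * (s - q) + (p + ρ) * q * s))) := by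
  have hs : 0 < s := hq0.trans hqs
  refine ⟨(2 * (2 ^ s * (2 * Cs)) + 2 * Cs + 2) ^ (1 / q), by positivity, ?_⟩
  intro T _ h ⟨hh0, hh1⟩ v₁ v₂ τ hv₁ hv₂ hc₁ hc₂ hτ hτT hA hv₁p hv₂p hv₁s hv₂s he
  rw [mul_div_cancel₀ _ two_ne_zero] at he
  have hmeas (v : ℝ → Ω → ℝ) (hv : Measurable (Function.uncurry v)) (t : ℝ) :
      Measurable (v t) :=
    hv.comp measurable_prodMk_left
  have hsup (v : ℝ → Ω → ℝ) (hv : Measurable (Function.uncurry v))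
      (hc : ∀ᵐ ω ∂μ, ContinuousOn (fun t => v t ω) (Icc 0 T)) :
      AEMeasurable (fun ω => ⨆ t : Icc (0 : ℝ) T, |v t.1 ω|) μ :=
    aemeasurable_iSup_of_ae_continuous μ (fun t => (hmeas v hv t).abs)
      (hc.mono fun ω hω => hω.domRestrict.abs)
  have hμA : μ {ω | τ ω < T} ≤ ofReal (2 * Cs * h ^ (truncationExponent p q s ρ * p)) := by
    refine (measure_le_two_mul_of_subset_union μ (hsup v₁ hv₁ hc₁) (hsup v₂ hv₂ hc₂) hp.le
      (Real.rpow_pos_of_pos hh0 _) hCs.le hA hv₁p hv₂p).trans_eq ?_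
    rw [← Real.rpow_mul hh0.le, neg_mul_neg]
    rfl
  refine ENNReal.rpow_one_div_le_ofReal hq0 (by positivity) hh0.le (iSup_le fun t => ?_)
  have hXs : ∫⁻ ω, ofReal (|v₁ t ω - v₂ t ω| ^ s) ∂μ ≤ ofReal (2 ^ s * (2 * Cs)) :=
    calc _ ≤ ofReal (2 ^ s) * (ofReal Cs + ofReal Cs) :=
          (lintegral_abs_sub_rpow_le μ (hmeas v₁ hv₁ t) hs.le).trans
            (by gcongr; exacts [(le_iSup _ t).trans hv₁s, (le_iSup _ t).trans hv₂s])
      _ = _ := by rw [← ofReal_add hCs.le hCs.le, ← ofReal_mul (by positivity), two_mul]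
  exact lintegral_rpow_le_of_moment_bounds μ ((hmeas v₁ hv₁ t).sub (hmeas v₂ hv₂ t)).abs
    (fun _ => abs_nonneg _) (measurableSet_lt hτ measurable_const) hq0.le hqs (by positivity)
    (by positivity) hh0 hh1 hXs hμA
    ((setLIntegral_compl_sq_le_of_stopped μ (v := fun t ω => v₁ t ω - v₂ t ω) hτ
      (fun ω => (hτT ω).2) (hc₁.and hc₂ |>.mono fun ω hω => hω.1.sub hω.2) t.2).trans he)
    (mul_optimalRate_eq hp hq0 hqs hρ).le (mul_optimalRate_le_mul_half hp hq0 hqs hρ)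
    fun hq2 => mul_optimalRate_le_mul_div hp hq0 hqs hρ (hq2.trans hqs)

/-- Optimal-rate version of lemma `lem:rate_weak`: with `γ = qs/(p(qs+2(s-q))+qρs)` and
`δ = (1-ργ)/2`, the pointwise strong error in `L^q` is of order
`h^(p(s-q)/(2p(s-q)+(p+ρ)qs))`, with a constant depending only on `p`, `q`, `s`, `ρ`, `C⋆`. -/
theorem enkf_rate_weak_optimal
    {Ω : Type*} [MeasurableSpace Ω] (μ : Measure Ω) [IsProbabilityMeasure μ]
    (p q s ρ Cs : ℝ) (hp : 0 < p) (hps : p < s) (hq0 : 0 < q) (hqs : q < s)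
    (hρ : 0 < ρ) (hCs : 0 < Cs) :
    ∃ C > 0, ∀ T : ℝ, 0 < T →
      ∀ h ∈ Ioc (0:ℝ) 1, ∀ (v₁ v₂ : ℝ → Ω → ℝ) (τ : Ω → ℝ),
      Measurable (Function.uncurry v₁) → Measurable (Function.uncurry v₂) →
      (∀ᵐ ω ∂μ, ContinuousOn (fun t => v₁ t ω) (Icc 0 T)) →
      (∀ᵐ ω ∂μ, ContinuousOn (fun t => v₂ t ω) (Icc 0 T)) →
      Measurable τ → (∀ ω, τ ω ∈ Icc (0:ℝ) T) →
      ({ω | τ ω < T} ⊆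
        {ω | h ^ (-(q * s / (p * (q * s + 2 * (s - q)) + q * ρ * s)))
              ≤ ⨆ t : Icc (0:ℝ) T, |v₁ t.1 ω|}
          ∪ {ω | h ^ (-(q * s / (p * (q * s + 2 * (s - q)) + q * ρ * s)))
              ≤ ⨆ t : Icc (0:ℝ) T, |v₂ t.1 ω|}) →
      (∫⁻ ω, ENNReal.ofReal ((⨆ t : Icc (0:ℝ) T, |v₁ t.1 ω|) ^ p) ∂μ ≤ ENNReal.ofReal Cs) →
      (∫⁻ ω, ENNReal.ofReal ((⨆ t : Icc (0:ℝ) T, |v₂ t.1 ω|) ^ p) ∂μ ≤ ENNReal.ofReal Cs) →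
      ((⨆ t : Icc (0:ℝ) T, ∫⁻ ω, ENNReal.ofReal (|v₁ t.1 ω| ^ s) ∂μ) ≤ ENNReal.ofReal Cs) →
      ((⨆ t : Icc (0:ℝ) T, ∫⁻ ω, ENNReal.ofReal (|v₂ t.1 ω| ^ s) ∂μ) ≤ ENNReal.ofReal Cs) →
      (∫⁻ ω, ENNReal.ofReal ((⨆ t : Icc (0:ℝ) (τ ω), |v₁ t.1 ω - v₂ t.1 ω|) ^ 2) ∂μ
          ≤ ENNReal.ofReal
              (h ^ (2 * ((1 - ρ * (q * s / (p * (q * s + 2 * (s - q)) + q * ρ * s))) / 2)))) →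
      (⨆ t : Icc (0:ℝ) T, ∫⁻ ω, ENNReal.ofReal (|v₁ t.1 ω - v₂ t.1 ω| ^ q) ∂μ) ^ (1/q)
        ≤ ENNReal.ofReal (C * h ^ (p * (s - q) / (2 * p * (s - q) + (p + ρ) * q * s))) :=
  enkf_rate_weak_optimal_general μ p q s ρ Cs hp hq0 hqs hρ hCs
end

section
/- For every ε > 0 and all real numbers v, w, one has the exact identity (f_ε(v) − f_ε(w))·(v − w) + (1/2)·(σ_ε(v) − σ_ε(w))² = −((v − w)²/2) · [v² + w² + 2ε·v²·w² + (v + w)²·(1 − 1/((1+ε·v²)(1+ε·w²)))] / ((1+ε·v²)(1+ε·w²)). In particular, since the bracketed numerator is at least v² + w², it follows that (f_ε(v) − f_ε(w))·(v − w) + (1/2)·(σ_ε(v) − σ_ε(w))² ≤ −((v − w)²/2)·(v² + w²)/((1+ε·v²)(1+ε·w²)) ≤ 0. -/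
/-- One-sided Lipschitz (monotonicity) identity and estimate for the tamed coefficients
`f_ε(x) = -x³/(1+εx²)`, `σ_ε(x) = x²/(1+εx²)`. -/
theorem tamed_one_sided_lipschitz_identity (ε : ℝ) (hε : 0 < ε) (v w : ℝ) :
    ((-v ^ 3 / (1 + ε * v ^ 2)) - (-w ^ 3 / (1 + ε * w ^ 2))) * (v - w)
        + (1 / 2) * ((v ^ 2 / (1 + ε * v ^ 2)) - (w ^ 2 / (1 + ε * w ^ 2))) ^ 2
      = -((v - w) ^ 2 / 2)
          * ((v ^ 2 + w ^ 2 + 2 * ε * v ^ 2 * w ^ 2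
              + (v + w) ^ 2 * (1 - 1 / ((1 + ε * v ^ 2) * (1 + ε * w ^ 2))))
            / ((1 + ε * v ^ 2) * (1 + ε * w ^ 2)))
    ∧ ((-v ^ 3 / (1 + ε * v ^ 2)) - (-w ^ 3 / (1 + ε * w ^ 2))) * (v - w)
        + (1 / 2) * ((v ^ 2 / (1 + ε * v ^ 2)) - (w ^ 2 / (1 + ε * w ^ 2))) ^ 2
      ≤ -((v - w) ^ 2 / 2) * ((v ^ 2 + w ^ 2) / ((1 + ε * v ^ 2) * (1 + ε * w ^ 2)))
    ∧ -((v - w) ^ 2 / 2) * ((v ^ 2 + w ^ 2) / ((1 + ε * v ^ 2) * (1 + ε * w ^ 2))) ≤ 0 := by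
  have hv : (0:ℝ) < 1 + ε * v ^ 2 := by positivity
  have hw : (0:ℝ) < 1 + ε * w ^ 2 := by positivity
  have hvw : (0:ℝ) < (1 + ε * v ^ 2) * (1 + ε * w ^ 2) := by positivity
  have hid : ((-v ^ 3 / (1 + ε * v ^ 2)) - (-w ^ 3 / (1 + ε * w ^ 2))) * (v - w)
        + (1 / 2) * ((v ^ 2 / (1 + ε * v ^ 2)) - (w ^ 2 / (1 + ε * w ^ 2))) ^ 2
      = -((v - w) ^ 2 / 2)
          * ((v ^ 2 + w ^ 2 + 2 * ε * v ^ 2 * w ^ 2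
              + (v + w) ^ 2 * (1 - 1 / ((1 + ε * v ^ 2) * (1 + ε * w ^ 2))))
            / ((1 + ε * v ^ 2) * (1 + ε * w ^ 2))) := by
    field_simp
    ring
  have hlast : -((v - w) ^ 2 / 2) * ((v ^ 2 + w ^ 2) / ((1 + ε * v ^ 2) * (1 + ε * w ^ 2))) ≤ 0 := by
    have h1 : (0:ℝ) ≤ (v - w) ^ 2 / 2 * ((v ^ 2 + w ^ 2) / ((1 + ε * v ^ 2) * (1 + ε * w ^ 2))) := by
      positivity
    linarith
  refine ⟨hid, ?_, hlast⟩
  rw [hid]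
  rw [neg_mul, neg_mul, neg_le_neg_iff]
  have hnum : (v ^ 2 + w ^ 2) ≤ v ^ 2 + w ^ 2 + 2 * ε * v ^ 2 * w ^ 2
      + (v + w) ^ 2 * (1 - 1 / ((1 + ε * v ^ 2) * (1 + ε * w ^ 2))) := by
    have h1 : (1:ℝ) / ((1 + ε * v ^ 2) * (1 + ε * w ^ 2)) ≤ 1 := by
      rw [div_le_one hvw]
      nlinarith [mul_nonneg hε.le (sq_nonneg v), mul_nonneg hε.le (sq_nonneg w),
        mul_nonneg (mul_nonneg hε.le (sq_nonneg v)) (mul_nonneg hε.le (sq_nonneg w))]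
    nlinarith [sq_nonneg (v + w), mul_nonneg (mul_nonneg hε.le (sq_nonneg v)) (sq_nonneg w)]
  have h2 : (v ^ 2 + w ^ 2) / ((1 + ε * v ^ 2) * (1 + ε * w ^ 2))
      ≤ (v ^ 2 + w ^ 2 + 2 * ε * v ^ 2 * w ^ 2
          + (v + w) ^ 2 * (1 - 1 / ((1 + ε * v ^ 2) * (1 + ε * w ^ 2))))
        / ((1 + ε * v ^ 2) * (1 + ε * w ^ 2)) := by gcongr
  exact mul_le_mul_of_nonneg_left h2 (by positivity)
end

section
/- There exists a constant C > 0 such that for every ε > 0 and all real numbers v, w: (v² + w² + ε·v²·w²) / ((1+ε·v²)(1+ε·w²)) ≥ C · min{1/ε, v² + w²}. -/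
/-- Lower bound on the dissipation coefficient of the tamed equation (calculation for `T(v,e)`
in the appendix): there is `C > 0` with
`(v²+w²+εv²w²)/((1+εv²)(1+εw²)) ≥ C·min{1/ε, v²+w²}` for all `ε > 0` and `v, w ∈ ℝ`. -/
theorem tamed_dissipation_lower_bound :
    ∃ C > (0:ℝ), ∀ ε : ℝ, 0 < ε → ∀ v w : ℝ,
      (v ^ 2 + w ^ 2 + ε * v ^ 2 * w ^ 2) / ((1 + ε * v ^ 2) * (1 + ε * w ^ 2))
        ≥ C * min (1 / ε) (v ^ 2 + w ^ 2) := by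
  refine ⟨1/4, by norm_num, ?_⟩
  intro ε hε v w
  have hD : 0 < (1 + ε * v ^ 2) * (1 + ε * w ^ 2) := by positivity
  rw [ge_iff_le, le_div_iff₀ hD]
  rcases le_total (1 / ε) (v ^ 2 + w ^ 2) with h | h
  · rw [min_eq_left h]
    set t := 1 / ε with htdef
    have ht : ε * t = 1 := by rw [htdef, mul_one_div, div_self hε.ne']
    have e1 : t * (ε * v ^ 2) = v ^ 2 := by
      rw [show t * (ε * v ^ 2) = (ε * t) * v ^ 2 by ring, ht, one_mul]
    have e2 : t * (ε * w ^ 2) = w ^ 2 := by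
      rw [show t * (ε * w ^ 2) = (ε * t) * w ^ 2 by ring, ht, one_mul]
    have e3 : t * (ε * v ^ 2 * (ε * w ^ 2)) = ε * v ^ 2 * w ^ 2 := by
      rw [show t * (ε * v ^ 2 * (ε * w ^ 2)) = (ε * t) * (ε * v ^ 2 * w ^ 2) by ring, ht, one_mul]
    have hn : 0 ≤ ε * v ^ 2 * w ^ 2 := by positivity
    nlinarith [e1, e2, e3, h, hn]
  · rw [min_eq_right h]
    have h' : ε * (v ^ 2 + w ^ 2) ≤ 1 := by
      rw [div_eq_mul_inv, one_mul] at h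
      calc ε * (v ^ 2 + w ^ 2) ≤ ε * ε⁻¹ := by
            exact mul_le_mul_of_nonneg_left h hε.le
        _ = 1 := mul_inv_cancel₀ hε.ne'
    nlinarith [sq_nonneg v, sq_nonneg w, mul_nonneg hε.le (sq_nonneg v),
      mul_nonneg hε.le (sq_nonneg w), h',
      mul_nonneg (mul_nonneg hε.le (sq_nonneg v)) (mul_nonneg hε.le (sq_nonneg w)),
      mul_nonneg (add_nonneg (sq_nonneg v) (sq_nonneg w)) (mul_nonneg hε.le (sq_nonneg v)),
      mul_nonneg (add_nonneg (sq_nonneg v) (sq_nonneg w)) (mul_nonneg hε.le (sq_nonneg w)),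
      mul_le_mul_of_nonneg_left h' (add_nonneg (sq_nonneg v) (sq_nonneg w)),
      sq_nonneg (ε * v ^ 2 - ε * w ^ 2),
      mul_le_mul_of_nonneg_left h' (mul_nonneg (mul_nonneg hε.le (sq_nonneg v)) (sq_nonneg w))]
end

section
/- There exists a constant C > 0 such that for every ε > 0 and all real numbers z, ξ: |f_ε(ξ) − f_ε(z)| ≤ C · min{1/ε, z² + ξ²} · |ξ − z|. -/
/-- Local Lipschitz estimate for the tamed drift `f_ε(x) = -x³/(1+εx²)`:
`|f_ε(ξ) - f_ε(z)| ≤ C·min{1/ε, z²+ξ²}·|ξ-z|`. -/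
theorem tamed_drift_local_lipschitz :
    ∃ C > (0:ℝ), ∀ ε : ℝ, 0 < ε → ∀ z ξ : ℝ,
      |(-ξ ^ 3 / (1 + ε * ξ ^ 2)) - (-z ^ 3 / (1 + ε * z ^ 2))|
        ≤ C * min (1 / ε) (z ^ 2 + ξ ^ 2) * |ξ - z| := by
  refine ⟨4, by norm_num, fun ε hε z ξ => ?_⟩
  have hD1 : (0:ℝ) < 1 + ε * ξ ^ 2 := by nlinarith [sq_nonneg ξ]
  have hD2 : (0:ℝ) < 1 + ε * z ^ 2 := by nlinarith [sq_nonneg z]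
  have hD : (0:ℝ) < (1 + ε * ξ ^ 2) * (1 + ε * z ^ 2) := mul_pos hD1 hD2
  set N : ℝ := ξ ^ 2 + ξ * z + z ^ 2 + ε * ξ ^ 2 * z ^ 2 with hN
  have hNnonneg : 0 ≤ N := by nlinarith [sq_nonneg (ξ + z), sq_nonneg (ξ - z), sq_nonneg ξ, sq_nonneg z, mul_nonneg (mul_nonneg hε.le (sq_nonneg ξ)) (sq_nonneg z)]
  have key : (-ξ ^ 3 / (1 + ε * ξ ^ 2)) - (-z ^ 3 / (1 + ε * z ^ 2))
      = -(N / ((1 + ε * ξ ^ 2) * (1 + ε * z ^ 2))) * (ξ - z) := by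
    field_simp
    ring
  rw [key, abs_mul, abs_neg, abs_div, abs_of_nonneg hNnonneg, abs_of_pos hD]
  have hbound : N / ((1 + ε * ξ ^ 2) * (1 + ε * z ^ 2)) ≤ 4 * min (1 / ε) (z ^ 2 + ξ ^ 2) := by
    rcases min_cases (1 / ε) (z ^ 2 + ξ ^ 2) with ⟨h, _⟩ | ⟨h, _⟩ <;> rw [h]
    · rw [div_le_iff₀ hD]
      have : 4 * (1 / ε) * ((1 + ε * ξ ^ 2) * (1 + ε * z ^ 2))
          = (4 * ((1 + ε * ξ ^ 2) * (1 + ε * z ^ 2))) / ε := by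
        field_simp
      rw [this, le_div_iff₀ hε]
      nlinarith [sq_nonneg (ξ - z), sq_nonneg (ξ + z), mul_nonneg hε.le (sq_nonneg (ξ - z)),
        mul_nonneg (mul_nonneg hε.le hε.le) (mul_nonneg (sq_nonneg ξ) (sq_nonneg z)),
        mul_nonneg hε.le (sq_nonneg ξ), mul_nonneg hε.le (sq_nonneg z)]
    · rw [div_le_iff₀ hD]
      nlinarith [sq_nonneg (ξ - z), sq_nonneg (ξ + z),
        mul_nonneg (mul_nonneg hε.le (sq_nonneg ξ)) (sq_nonneg z),
        mul_nonneg hε.le (mul_nonneg (sq_nonneg ξ) (sq_nonneg ξ)),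
        mul_nonneg hε.le (mul_nonneg (sq_nonneg z) (sq_nonneg z)),
        mul_nonneg (mul_nonneg (mul_nonneg hε.le hε.le) (mul_nonneg (sq_nonneg ξ) (sq_nonneg z))) (sq_nonneg (ξ + z)),
        mul_nonneg (mul_nonneg (mul_nonneg hε.le hε.le) (mul_nonneg (sq_nonneg ξ) (sq_nonneg z))) (add_nonneg (sq_nonneg ξ) (sq_nonneg z))]
  exact mul_le_mul_of_nonneg_right hbound (abs_nonneg _)
end

section
/- There exists a constant C > 0 such that for every ε > 0 and all real numbers z, ξ: |σ_ε(ξ) − σ_ε(z)| ≤ C · (min{1/ε, z² + ξ²})^{1/2} · |ξ − z|. In fact one may take C = √2. -/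
lemma tamed_diffusion_main (ε : ℝ) (hε : 0 < ε) (z ξ : ℝ) :
    |(ξ ^ 2 / (1 + ε * ξ ^ 2)) - (z ^ 2 / (1 + ε * z ^ 2))|
      ≤ Real.sqrt 2 * Real.sqrt (min (1 / ε) (z ^ 2 + ξ ^ 2)) * |ξ - z| := by
  set A := 1 + ε * ξ ^ 2 with hA
  set B := 1 + ε * z ^ 2 with hB
  have hA1 : 1 ≤ A := by nlinarith [sq_nonneg ξ]
  have hB1 : 1 ≤ B := by nlinarith [sq_nonneg z]
  have hA0 : 0 < A := lt_of_lt_of_le one_pos hA1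
  have hB0 : 0 < B := lt_of_lt_of_le one_pos hB1
  have hABpos : 0 < A * B := mul_pos hA0 hB0
  set m := min (1 / ε) (z ^ 2 + ξ ^ 2) with hm
  have hs : 0 ≤ z ^ 2 + ξ ^ 2 := by positivity
  have hm0 : 0 ≤ m := le_min (by positivity) hs
  have hdiff : ξ ^ 2 / A - z ^ 2 / B = (ξ + z) * (ξ - z) / (A * B) := by
    field_simp; ring
  rw [hdiff, abs_div, abs_mul, abs_of_pos hABpos, div_le_iff₀ hABpos]
  -- key squared inequality : z²+ξ² ≤ m (AB)²
  have hAB1 : 1 ≤ A * B := one_le_mul_of_one_le_of_one_le hA1 hB1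
  have hABs : ε * (z ^ 2 + ξ ^ 2) ≤ A * B := by nlinarith [sq_nonneg (ξ * z), sq_nonneg ξ, sq_nonneg z, hε.le]
  have hm2 : z ^ 2 + ξ ^ 2 ≤ m * (A * B) ^ 2 := by
    rcases le_total (1 / ε) (z ^ 2 + ξ ^ 2) with h | h
    · have hmv : m = 1 / ε := min_eq_left h
      rw [hmv]
      have h1 : ε * (z ^ 2 + ξ ^ 2) ≤ (A * B) ^ 2 := by nlinarith
      have h2 := mul_le_mul_of_nonneg_left h1 (le_of_lt (by positivity : (0:ℝ) < 1 / ε))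
      have h3 : 1 / ε * (ε * (z ^ 2 + ξ ^ 2)) = z ^ 2 + ξ ^ 2 := by field_simp
      linarith [h2, h3.ge, h3.le]
    · have hmv : m = z ^ 2 + ξ ^ 2 := min_eq_right h
      rw [hmv]
      have h1 : 1 ≤ (A * B) ^ 2 := by nlinarith [hAB1]
      nlinarith [h1, hs]
  have key : |ξ + z| ≤ Real.sqrt 2 * Real.sqrt m * (A * B) := by
    have h1 : |ξ + z| = Real.sqrt ((ξ + z) ^ 2) := (Real.sqrt_sq_eq_abs _).symm
    have h2 : Real.sqrt 2 * Real.sqrt m * (A * B)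
        = Real.sqrt (2 * m * (A * B) ^ 2) := by
      rw [Real.sqrt_mul (by positivity), Real.sqrt_mul (by norm_num),
        Real.sqrt_sq hABpos.le]
    rw [h1, h2]
    apply Real.sqrt_le_sqrt
    nlinarith [sq_nonneg (ξ - z)]
  have := mul_le_mul_of_nonneg_right key (abs_nonneg (ξ - z))
  nlinarith [this]

/-- Local Lipschitz estimate for the tamed diffusion `σ_ε(x) = x²/(1+εx²)`:
`|σ_ε(ξ) - σ_ε(z)| ≤ C·(min{1/ε, z²+ξ²})^{1/2}·|ξ-z|`; one may take `C = √2`. -/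
theorem tamed_diffusion_local_lipschitz :
    (∃ C > (0:ℝ), ∀ ε : ℝ, 0 < ε → ∀ z ξ : ℝ,
      |(ξ ^ 2 / (1 + ε * ξ ^ 2)) - (z ^ 2 / (1 + ε * z ^ 2))|
        ≤ C * Real.sqrt (min (1 / ε) (z ^ 2 + ξ ^ 2)) * |ξ - z|)
    ∧ (∀ ε : ℝ, 0 < ε → ∀ z ξ : ℝ,
      |(ξ ^ 2 / (1 + ε * ξ ^ 2)) - (z ^ 2 / (1 + ε * z ^ 2))|
        ≤ Real.sqrt 2 * Real.sqrt (min (1 / ε) (z ^ 2 + ξ ^ 2)) * |ξ - z|) := by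
  refine ⟨⟨Real.sqrt 2, by positivity, fun ε hε z ξ => tamed_diffusion_main ε hε z ξ⟩,
    fun ε hε z ξ => tamed_diffusion_main ε hε z ξ⟩
end

section
/- For the tamed (EnKF) Euler–Maruyama scheme (v_n), every iterate v_n is square-integrable and for every N ≥ 0 one has the energy estimate E[v_N²] + h · Σ_{n=0}^{N−1} E[ v_n⁴ / (1 + h·v_n²)² ] ≤ E[v_0²]. In particular E[v_n²] ≤ E[v_0²] for all n. -/
/-!
Writing `f x = x / (1 + h x²)` and `g x = x² / (1 + h x²)`, the scheme reads
`v_{n+1} = f v_n + ξ_{n+1} g v_n`. The iterate `v_n` is a measurable function of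
`v₀, ξ₁, …, ξₙ`, so `ξ_{n+1}` is independent of it; being centred with variance `h`, it kills
the cross term and `E[v_{n+1}²] = E[f(v_n)²] + h E[g(v_n)²]`. The pointwise bound
`f(x)² + 2h g(x)² ≤ x²` turns this into `E[v_{n+1}²] + h E[g(v_n)²] ≤ E[v_n²]`, which telescopes.
-/

open MeasureTheory ProbabilityTheory Finset
open scoped NNReal

namespace ProbabilityTheory

variable {Ω : Type*} [MeasurableSpace Ω] {μ : Measure Ω} {X : Ω → ℝ} {m : ℝ} {v : ℝ≥0}

lemma HasLaw.memLp_of_gaussianReal (hX : HasLaw X (gaussianReal m v) μ) (p : ℝ≥0) :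
    MemLp X p μ := by
  have hid : MemLp id p (μ.map X) := hX.map_eq ▸ memLp_id_gaussianReal p
  exact hid.comp_of_map hX.aemeasurable

lemma HasLaw.integral_eq_of_gaussianReal (hX : HasLaw X (gaussianReal m v) μ) : μ[X] = m :=
  hX.integral_eq.trans integral_id_gaussianReal

lemma HasLaw.integral_sq_of_gaussianReal_zero (hX : HasLaw X (gaussianReal 0 v) μ) :
    ∫ ω, X ω ^ 2 ∂μ = v := by
  rw [← variance_of_integral_eq_zero hX.aemeasurable hX.integral_eq_of_gaussianReal,
    hX.variance_eq, variance_id_gaussianReal]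

variable {β : Type*} [MeasurableSpace β]

lemma IndepFun.memLp_two_mul {Z : Ω → ℝ} (hXZ : IndepFun X Z μ) (hX : MemLp X 2 μ)
    (hZ : MemLp Z 2 μ) : MemLp (X * Z) 2 μ := by
  have hsq : IndepFun (fun ω => X ω ^ 2) (fun ω => Z ω ^ 2) μ :=
    hXZ.comp (measurable_id.pow_const 2) (measurable_id.pow_const 2)
  refine (memLp_two_iff_integrable_sq (hX.1.mul hZ.1)).2 ?_
  simp only [Pi.mul_apply, mul_pow]
  exact hsq.integrable_mul hX.integrable_sq hZ.integrable_sq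

lemma integral_sq_add_mul_of_indepFun [IsProbabilityMeasure μ] {Y : Ω → β} {f g : β → ℝ}
    (hf : Measurable f) (hg : Measurable g) (hX : MemLp X 2 μ) (hX0 : μ[X] = 0)
    (hfY : MemLp (fun ω => f (Y ω)) 2 μ) (hgY : MemLp (fun ω => g (Y ω)) 2 μ)
    (hXY : IndepFun X Y μ) :
    ∫ ω, (f (Y ω) + X ω * g (Y ω)) ^ 2 ∂μ
      = ∫ ω, f (Y ω) ^ 2 ∂μ + (∫ ω, X ω ^ 2 ∂μ) * ∫ ω, g (Y ω) ^ 2 ∂μ := by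
  have hcross : IndepFun X (fun ω => f (Y ω) * g (Y ω)) μ :=
    hXY.comp measurable_id (hf.mul hg)
  have hsq : IndepFun (fun ω => X ω ^ 2) (fun ω => g (Y ω) ^ 2) μ :=
    hXY.comp (measurable_id.pow_const 2) (hg.pow_const 2)
  have hfg : Integrable (fun ω => f (Y ω) * g (Y ω)) μ := hfY.integrable_mul hgY
  have hXfg : Integrable (fun ω => X ω * (f (Y ω) * g (Y ω))) μ :=
    hcross.integrable_mul (hX.integrable one_le_two) hfg
  have hXg : Integrable (fun ω => X ω ^ 2 * g (Y ω) ^ 2) μ :=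
    hsq.integrable_mul hX.integrable_sq hgY.integrable_sq
  calc ∫ ω, (f (Y ω) + X ω * g (Y ω)) ^ 2 ∂μ
      = ∫ ω, f (Y ω) ^ 2 + 2 * (X ω * (f (Y ω) * g (Y ω))) + X ω ^ 2 * g (Y ω) ^ 2 ∂μ := by
        congr 1 with ω; ring
    _ = ∫ ω, f (Y ω) ^ 2 ∂μ + 2 * ∫ ω, X ω * (f (Y ω) * g (Y ω)) ∂μ
          + ∫ ω, X ω ^ 2 * g (Y ω) ^ 2 ∂μ := by
        rw [integral_add _ hXg, integral_add hfY.integrable_sq (hXfg.const_mul 2),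
          integral_const_mul]
        exact hfY.integrable_sq.add (hXfg.const_mul 2)
    _ = ∫ ω, f (Y ω) ^ 2 ∂μ + (∫ ω, X ω ^ 2 ∂μ) * ∫ ω, g (Y ω) ^ 2 ∂μ := by
        rw [hcross.integral_fun_mul_eq_mul_integral hX.1 hfg.1,
          hsq.integral_fun_mul_eq_mul_integral hX.integrable_sq.1 hgY.integrable_sq.1, hX0]
        ring

end ProbabilityTheory

section Recursion

variable {Ω α β : Type*} [MeasurableSpace α] [MeasurableSpace β]

/-- `σ(v₀, ξ₁, …, ξₙ)`. -/
abbrev pastSigma (v₀ : Ω → α) (ξ : ℕ → Ω → β) (n : ℕ) : MeasurableSpace Ω :=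
  MeasurableSpace.comap v₀ inferInstance
    ⊔ ⨆ i ∈ Finset.Icc 1 n, MeasurableSpace.comap (ξ i) inferInstance

variable {v₀ : Ω → α} {ξ : ℕ → Ω → β}

lemma pastSigma_mono : Monotone (pastSigma v₀ ξ) := fun _ _ hmn =>
  sup_le_sup_left (biSup_mono fun _ hi => Finset.Icc_subset_Icc_right hmn hi) _

lemma measurable_pastSigma_succ (n : ℕ) : Measurable[pastSigma v₀ ξ (n + 1)] (ξ (n + 1)) :=
  measurable_iff_comap_le.2 <| le_sup_of_le_right <|
    le_biSup (fun i => MeasurableSpace.comap (ξ i) inferInstance)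
      (Finset.mem_Icc.2 ⟨Nat.le_add_left 1 n, le_rfl⟩)

variable {Φ : α → β → α} {v : ℕ → Ω → α}

lemma measurable_pastSigma_of_rec (hΦ : Measurable (Function.uncurry Φ)) (hv0 : v 0 = v₀)
    (hrec : ∀ n ω, v (n + 1) ω = Φ (v n ω) (ξ (n + 1) ω)) (n : ℕ) :
    Measurable[pastSigma v₀ ξ n] (v n) := by
  induction n with
  | zero => exact hv0 ▸ measurable_iff_comap_le.2 le_sup_left
  | succ n ih =>
    have hv : Measurable[pastSigma v₀ ξ (n + 1)] (v n) :=
      ih.mono (pastSigma_mono n.le_succ) le_rfl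
    rw [funext (hrec n)]
    exact hΦ.comp (hv.prodMk (measurable_pastSigma_succ n))

lemma indepFun_of_rec [MeasurableSpace Ω] {μ : Measure Ω} (hΦ : Measurable (Function.uncurry Φ))
    (hindep : ∀ n, Indep (MeasurableSpace.comap (ξ (n + 1)) inferInstance)
      (pastSigma v₀ ξ n) μ)
    (hv0 : v 0 = v₀) (hrec : ∀ n ω, v (n + 1) ω = Φ (v n ω) (ξ (n + 1) ω)) (n : ℕ) :
    IndepFun (ξ (n + 1)) (v n) μ :=
  indep_of_indep_of_le_right (hindep n)
    (measurable_iff_comap_le.1 (measurable_pastSigma_of_rec hΦ hv0 hrec n))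

end Recursion

section TamedScheme

variable {h : ℝ}

noncomputable def tamedStep (h x z : ℝ) : ℝ :=
  x - h * (x ^ 3 / (1 + h * x ^ 2)) + z * (x ^ 2 / (1 + h * x ^ 2))

noncomputable def tamedDrift (h x : ℝ) : ℝ := x / (1 + h * x ^ 2)

noncomputable def tamedDiffusion (h x : ℝ) : ℝ := x ^ 2 / (1 + h * x ^ 2)

lemma measurable_uncurry_tamedStep (h : ℝ) : Measurable (Function.uncurry (tamedStep h)) := by
  unfold tamedStep; fun_prop

lemma measurable_tamedDrift (h : ℝ) : Measurable (tamedDrift h) := by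
  unfold tamedDrift; fun_prop

lemma measurable_tamedDiffusion (h : ℝ) : Measurable (tamedDiffusion h) := by
  unfold tamedDiffusion; fun_prop

lemma one_add_mul_sq_pos (hh : 0 ≤ h) (x : ℝ) : 0 < 1 + h * x ^ 2 := by positivity

lemma tamedStep_eq (hh : 0 ≤ h) (x z : ℝ) :
    tamedStep h x z = tamedDrift h x + z * tamedDiffusion h x := by
  have := (one_add_mul_sq_pos hh x).ne'
  unfold tamedStep tamedDrift tamedDiffusion
  field_simp
  ring

lemma abs_tamedDrift_le (hh : 0 ≤ h) (x : ℝ) : |tamedDrift h x| ≤ |x| := by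
  rw [tamedDrift, abs_div, abs_of_pos (one_add_mul_sq_pos hh x)]
  exact div_le_self (abs_nonneg x) (by nlinarith [sq_nonneg x])

lemma abs_tamedDiffusion_le (hh : 0 < h) (x : ℝ) : |tamedDiffusion h x| ≤ h⁻¹ := by
  have hD := one_add_mul_sq_pos hh.le x
  rw [tamedDiffusion, abs_of_nonneg (by positivity), div_le_iff₀ hD, ← div_eq_inv_mul,
    le_div_iff₀ hh]
  linarith

lemma tamedDiffusion_sq (h x : ℝ) : tamedDiffusion h x ^ 2 = x ^ 4 / (1 + h * x ^ 2) ^ 2 := by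
  rw [tamedDiffusion, div_pow, ← pow_mul]

/-- Cleared of denominators this reads `x² + 2h x⁴ ≤ x² (1 + h x²)²`, the difference being
`h² x⁶`. -/
lemma tamedDrift_sq_add_le (hh : 0 ≤ h) (x : ℝ) :
    tamedDrift h x ^ 2 + 2 * h * tamedDiffusion h x ^ 2 ≤ x ^ 2 := by
  have hD := one_add_mul_sq_pos hh x
  rw [tamedDrift, tamedDiffusion, div_pow, div_pow, mul_div_assoc', ← add_div,
    div_le_iff₀ (by positivity)]
  nlinarith [mul_nonneg (mul_nonneg hh hh) (pow_nonneg (sq_nonneg x) 3)]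

variable {Ω : Type*} [MeasurableSpace Ω] {μ : Measure Ω} {w X : Ω → ℝ}

lemma memLp_tamedDrift (hh : 0 ≤ h) (hw : MemLp w 2 μ) :
    MemLp (fun ω => tamedDrift h (w ω)) 2 μ :=
  hw.of_le ((measurable_tamedDrift h).comp_aemeasurable hw.1.aemeasurable).aestronglyMeasurable
    (ae_of_all _ fun ω => abs_tamedDrift_le hh (w ω))

lemma memLp_tamedDiffusion [IsFiniteMeasure μ] (hh : 0 < h) (hw : AEMeasurable w μ) :
    MemLp (fun ω => tamedDiffusion h (w ω)) 2 μ :=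
  MemLp.of_bound ((measurable_tamedDiffusion h).comp_aemeasurable hw).aestronglyMeasurable _
    (ae_of_all _ fun ω => abs_tamedDiffusion_le hh (w ω))

lemma memLp_tamedStep [IsFiniteMeasure μ] (hh : 0 < h) (hw : MemLp w 2 μ) (hX : MemLp X 2 μ)
    (hXw : IndepFun X w μ) : MemLp (fun ω => tamedStep h (w ω) (X ω)) 2 μ := by
  simp_rw [tamedStep_eq hh.le]
  exact (memLp_tamedDrift hh.le hw).add <|
    (hXw.comp measurable_id (measurable_tamedDiffusion h)).memLp_two_mul hX
      (memLp_tamedDiffusion hh hw.1.aemeasurable)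

lemma integral_tamedStep_sq_add_le [IsProbabilityMeasure μ] (hh : 0 < h) (hw : MemLp w 2 μ)
    (hX : MemLp X 2 μ) (hX0 : μ[X] = 0) (hX2 : ∫ ω, X ω ^ 2 ∂μ = h) (hXw : IndepFun X w μ) :
    ∫ ω, tamedStep h (w ω) (X ω) ^ 2 ∂μ + h * ∫ ω, w ω ^ 4 / (1 + h * w ω ^ 2) ^ 2 ∂μ
      ≤ ∫ ω, w ω ^ 2 ∂μ := by
  have hf := memLp_tamedDrift hh.le hw
  have hg := memLp_tamedDiffusion hh hw.1.aemeasurable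
  simp_rw [tamedStep_eq hh.le, ← tamedDiffusion_sq]
  rw [integral_sq_add_mul_of_indepFun (measurable_tamedDrift h) (measurable_tamedDiffusion h)
    hX hX0 hf hg hXw, hX2, add_assoc, ← two_mul, ← mul_assoc, ← integral_const_mul,
    ← integral_add hf.integrable_sq (hg.integrable_sq.const_mul _)]
  exact integral_mono (hf.integrable_sq.add (hg.integrable_sq.const_mul _)) hw.integrable_sq
    fun ω => tamedDrift_sq_add_le hh.le (w ω)

end TamedScheme

lemma add_sum_range_le_of_succ_add_le {a b : ℕ → ℝ} (hab : ∀ n, a (n + 1) + b n ≤ a n)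
    (N : ℕ) : a N + ∑ n ∈ range N, b n ≤ a 0 := by
  induction N with
  | zero => simp
  | succ N ih => rw [sum_range_succ]; linarith [hab N]

theorem enkf_scheme_energy_estimate_general
    {Ω : Type*} [MeasurableSpace Ω] (μ : Measure Ω) [IsProbabilityMeasure μ]
    (h : ℝ) (hh : 0 < h)
    (v₀ : Ω → ℝ) (hv₀L2 : MemLp v₀ 2 μ)
    (ξ : ℕ → Ω → ℝ)
    (hlaw : ∀ n : ℕ, Measure.map (ξ (n + 1)) μ = gaussianReal 0 h.toNNReal)
    (hindep : ∀ n : ℕ, Indep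
      (MeasurableSpace.comap (ξ (n + 1)) inferInstance)
      ((MeasurableSpace.comap v₀ inferInstance)
        ⊔ ⨆ i ∈ Finset.Icc 1 n, MeasurableSpace.comap (ξ i) inferInstance) μ)
    (v : ℕ → Ω → ℝ) (hv0 : v 0 = v₀)
    (hrec : ∀ n ω, v (n + 1) ω
      = v n ω - h * ((v n ω) ^ 3 / (1 + h * (v n ω) ^ 2))
        + ξ (n + 1) ω * ((v n ω) ^ 2 / (1 + h * (v n ω) ^ 2))) :
    (∀ n, MemLp (v n) 2 μ)
    ∧ (∀ N : ℕ,
        (∫ ω, (v N ω) ^ 2 ∂μ)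
          + h * ∑ n ∈ Finset.range N, ∫ ω, (v n ω) ^ 4 / (1 + h * (v n ω) ^ 2) ^ 2 ∂μ
        ≤ ∫ ω, (v₀ ω) ^ 2 ∂μ)
    ∧ (∀ n : ℕ, ∫ ω, (v n ω) ^ 2 ∂μ ≤ ∫ ω, (v₀ ω) ^ 2 ∂μ) := by
  have hrec' : ∀ n ω, v (n + 1) ω = tamedStep h (v n ω) (ξ (n + 1) ω) := hrec
  have hξ : ∀ n, HasLaw (ξ (n + 1)) (gaussianReal 0 h.toNNReal) μ := fun n =>
    ⟨aemeasurable_of_map_neZero (by rw [hlaw n]; infer_instance), hlaw n⟩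
  have hξL2 : ∀ n, MemLp (ξ (n + 1)) 2 μ := fun n => (hξ n).memLp_of_gaussianReal 2
  have hξ0 : ∀ n, μ[ξ (n + 1)] = 0 := fun n => (hξ n).integral_eq_of_gaussianReal
  have hξ2 : ∀ n, ∫ ω, ξ (n + 1) ω ^ 2 ∂μ = h := fun n => by
    rw [(hξ n).integral_sq_of_gaussianReal_zero, Real.coe_toNNReal _ hh.le]
  have hind : ∀ n, IndepFun (ξ (n + 1)) (v n) μ :=
    indepFun_of_rec (measurable_uncurry_tamedStep h) hindep hv0 hrec'
  have hL2 : ∀ n, MemLp (v n) 2 μ := by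
    intro n
    induction n with
    | zero => exact hv0 ▸ hv₀L2
    | succ n ih => exact funext (hrec' n) ▸ memLp_tamedStep hh ih (hξL2 n) (hind n)
  have henergy : ∀ N : ℕ, ∫ ω, v N ω ^ 2 ∂μ
      + h * ∑ n ∈ range N, ∫ ω, v n ω ^ 4 / (1 + h * v n ω ^ 2) ^ 2 ∂μ ≤ ∫ ω, v₀ ω ^ 2 ∂μ := by
    intro N
    rw [mul_sum, ← hv0]
    refine add_sum_range_le_of_succ_add_le (a := fun n => ∫ ω, v n ω ^ 2 ∂μ) (fun n => ?_) N
    simp_rw [hrec' n]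
    exact integral_tamedStep_sq_add_le hh (hL2 n) (hξL2 n) (hξ0 n) (hξ2 n) (hind n)
  refine ⟨hL2, henergy, fun n => le_trans ?_ (henergy n)⟩
  refine le_add_of_nonneg_right (mul_nonneg hh.le (sum_nonneg fun k _ => ?_))
  exact integral_nonneg fun ω => by positivity

/-- Energy estimate for the tamed (EnKF) Euler–Maruyama scheme
`v_{n+1} = v_n - h·v_n³/(1+hv_n²) + ξ_{n+1}·v_n²/(1+hv_n²)` with i.i.d.-type Gaussian
increments `ξ_{n+1} ~ N(0,h)` independent of the past: every iterate is square-integrable,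
`E[v_N²] + h·Σ_{n<N} E[v_n⁴/(1+hv_n²)²] ≤ E[v_0²]`, and in particular
`E[v_n²] ≤ E[v_0²]` for all `n`. -/
theorem enkf_scheme_energy_estimate
    {Ω : Type*} [MeasurableSpace Ω] (μ : Measure Ω) [IsProbabilityMeasure μ]
    (h : ℝ) (hh : 0 < h)
    (v₀ : Ω → ℝ) (hv₀m : Measurable v₀) (hv₀L2 : MemLp v₀ 2 μ)
    (ξ : ℕ → Ω → ℝ) (hξm : ∀ n, Measurable (ξ n))
    (hlaw : ∀ n : ℕ, Measure.map (ξ (n + 1)) μ = gaussianReal 0 h.toNNReal)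
    (hindep : ∀ n : ℕ, Indep
      (MeasurableSpace.comap (ξ (n + 1)) inferInstance)
      ((MeasurableSpace.comap v₀ inferInstance)
        ⊔ ⨆ i ∈ Finset.Icc 1 n, MeasurableSpace.comap (ξ i) inferInstance) μ)
    (v : ℕ → Ω → ℝ) (hv0 : v 0 = v₀)
    (hrec : ∀ n ω, v (n + 1) ω
      = v n ω - h * ((v n ω) ^ 3 / (1 + h * (v n ω) ^ 2))
        + ξ (n + 1) ω * ((v n ω) ^ 2 / (1 + h * (v n ω) ^ 2))) :
    (∀ n, MemLp (v n) 2 μ)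
    ∧ (∀ N : ℕ,
        (∫ ω, (v N ω) ^ 2 ∂μ)
          + h * ∑ n ∈ Finset.range N, ∫ ω, (v n ω) ^ 4 / (1 + h * (v n ω) ^ 2) ^ 2 ∂μ
        ≤ ∫ ω, (v₀ ω) ^ 2 ∂μ)
    ∧ (∀ n : ℕ, ∫ ω, (v n ω) ^ 2 ∂μ ≤ ∫ ω, (v₀ ω) ^ 2 ∂μ) :=
  enkf_scheme_energy_estimate_general μ h hh v₀ hv₀L2 ξ hlaw hindep v hv0 hrec
end

section
/- Let h > 0 and y ∈ ℝ, and let u⁽¹⁾, u⁽²⁾, ξ⁽¹⁾, ξ⁽²⁾ be real numbers. Set ū := (u⁽¹⁾ + u⁽²⁾)/2, q := u⁽¹⁾ − ū, ξ̄ := (ξ⁽¹⁾ + ξ⁽²⁾)/2, and C := (1/2)·[(u⁽¹⁾ − ū)² + (u⁽²⁾ − ū)²] (so C = q²). Define the two-particle EnKF update (forward map the identity, noise covariance 1) by u'⁽ʲ⁾ := u⁽ʲ⁾ + h·C·(h·C + 1)^{−1}·(y − u⁽ʲ⁾) + √h·C·(h·C + 1)^{−1}·ξ⁽ʲ⁾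 for j = 1, 2, and set ū' := (u'⁽¹⁾ + u'⁽²⁾)/2, q' := u'⁽¹⁾ − ū'. Then q' = q − h·q³/(1 + h·q²) + (q²/(1 + h·q²))·√h·(ξ⁽¹⁾ − ξ̄), and ū' = ū + (q²/(1 + h·q²))·(h·(y − ū) + √h·ξ̄). -/
/-- Exact algebraic reduction of the two-particle EnKF update (identity forward map,
unit noise covariance): the deviation `q` of a particle from the ensemble mean evolves by the
tamed recursion `q' = q - h·q³/(1+hq²) + (q²/(1+hq²))·√h·(ξ⁽¹⁾ - ξ̄)`, and the mean evolves by
`ū' = ū + (q²/(1+hq²))·(h·(y-ū) + √h·ξ̄)`. -/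
theorem enkf_two_particle_reduction
    (h y u1 u2 ξ1 ξ2 : ℝ) (hh : 0 < h)
    (ub q ξb C u1' u2' ub' q' : ℝ)
    (hub : ub = (u1 + u2) / 2)
    (hq : q = u1 - ub)
    (hξb : ξb = (ξ1 + ξ2) / 2)
    (hC : C = (1 / 2) * ((u1 - ub) ^ 2 + (u2 - ub) ^ 2))
    (hu1' : u1' = u1 + h * C * (h * C + 1)⁻¹ * (y - u1)
        + Real.sqrt h * C * (h * C + 1)⁻¹ * ξ1)
    (hu2' : u2' = u2 + h * C * (h * C + 1)⁻¹ * (y - u2)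
        + Real.sqrt h * C * (h * C + 1)⁻¹ * ξ2)
    (hub' : ub' = (u1' + u2') / 2)
    (hq' : q' = u1' - ub') :
    C = q ^ 2
    ∧ q' = q - h * q ^ 3 / (1 + h * q ^ 2) + (q ^ 2 / (1 + h * q ^ 2)) * Real.sqrt h * (ξ1 - ξb)
    ∧ ub' = ub + (q ^ 2 / (1 + h * q ^ 2)) * (h * (y - ub) + Real.sqrt h * ξb) := by
  have hCq : C = q ^ 2 := by subst hub hq hC; ring
  have hpos : (0:ℝ) < 1 + h * q ^ 2 := by positivity
  have hne : (1 + h * q ^ 2) ≠ 0 := ne_of_gt hpos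
  have hne' : (h * C + 1) ≠ 0 := by rw [hCq]; linarith
  refine ⟨hCq, ?_, ?_⟩
  · subst hq' hub' hu1' hu2' hξb hq hub
    rw [hCq] at *
    field_simp
    ring
  · subst hub' hu1' hu2' hξb hq hub
    rw [hCq] at *
    field_simp
    ring
end
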